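/- Given three points x₀, x₁, x₂ ∈ ℝ³ that are affinely independent, there exists a unique pair (A, D) with A ∈ SO(3) and D ∈ ℝ³ such that A·x₀ + D = (0,0,0), A·x₁ + D = (L₁, 0, 0), and A·x₂ + D = (L₂ cos θ, L₂ sin θ, 0), where L₁ = ‖x₁ − x₀‖, L₂ = ‖x₂ − x₀‖, and θ ∈ (0, π) is the angle between x₁ − x₀ and x₂ − x₀. -/

import Mathlib

/-!
Rotations preserve dot and cross products, so `A ∈ SO(3)` sends `(u, v)` to `(a, b)` exactly when
it sends the rows `u, v, u × v` of `crossFrame u v` to those of `crossFrame a b`, i.e. when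
`crossFrame u v * Aᵀ = crossFrame a b`. If the Gram determinant of `(u, v)` is a unit, this forces
`A = ((crossFrame u v)⁻¹ * crossFrame a b)ᵀ`, and when `(a, b)` has the same Gram data as `(u, v)`
the two frames have the same Gram matrix and determinant, which makes that matrix a rotation.
The standard position `(L₁, 0, 0)`, `(L₂ cos θ, L₂ sin θ, 0)` has the Gram data of
`(x₁ - x₀, x₂ - x₀)`.
-/

open Matrix

section CrossFrame

variable {R : Type*} [CommRing R]

lemma of_vecCons_mul_transpose (p q r : Fin 3 → R) (A : Matrix (Fin 3) (Fin 3) R) :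
    of ![p, q, r] * Aᵀ = of ![A *ᵥ p, A *ᵥ q, A *ᵥ r] := by
  ext i : 1
  rw [mul_apply_eq_vecMul, vecMul_transpose]
  fin_cases i <;> rfl

lemma mulVec_cross_of_mem_specialOrthogonalGroup {A : Matrix (Fin 3) (Fin 3) R}
    (hA : A ∈ specialOrthogonalGroup (Fin 3) R) (u v : Fin 3 → R) :
    A *ᵥ (u ⨯₃ v) = (A *ᵥ u) ⨯₃ (A *ᵥ v) := by
  obtain ⟨hAo, hAdet⟩ := mem_specialOrthogonalGroup_iff.mp hA
  -- both sides equal `det ![w, u, v]`, since `det A = 1`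
  have hdot : ∀ w, w ⬝ᵥ Aᵀ *ᵥ ((A *ᵥ u) ⨯₃ (A *ᵥ v)) = w ⬝ᵥ u ⨯₃ v := fun w => by
    rw [dotProduct_mulVec, vecMul_transpose, triple_product_eq_det, triple_product_eq_det]
    change det (of ![A *ᵥ w, A *ᵥ u, A *ᵥ v]) = det (of ![w, u, v])
    rw [← of_vecCons_mul_transpose, det_mul, det_transpose, hAdet, mul_one]
  have hAAt : A * Aᵀ = 1 := (mem_orthogonalGroup_iff (Fin 3) R).mp hAo
  have hAt : Aᵀ *ᵥ ((A *ᵥ u) ⨯₃ (A *ᵥ v)) = u ⨯₃ v := by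
    ext i
    simpa using hdot (Pi.single i 1)
  rw [← hAt, mulVec_mulVec, hAAt, one_mulVec]

def crossFrame (u v : Fin 3 → R) : Matrix (Fin 3) (Fin 3) R :=
  of ![u, v, u ⨯₃ v]

lemma det_crossFrame (u v : Fin 3 → R) :
    (crossFrame u v).det = u ⬝ᵥ u * (v ⬝ᵥ v) - (u ⬝ᵥ v) ^ 2 := by
  change det ![u, v, u ⨯₃ v] = _
  rw [← triple_product_eq_det, triple_product_permutation, triple_product_permutation,
    cross_dot_cross, dotProduct_comm v u, sq]

lemma crossFrame_mul_transpose_self_eq {u v a b : Fin 3 → R} (huu : a ⬝ᵥ a = u ⬝ᵥ u)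
    (huv : a ⬝ᵥ b = u ⬝ᵥ v) (hvv : b ⬝ᵥ b = v ⬝ᵥ v) :
    crossFrame a b * (crossFrame a b)ᵀ = crossFrame u v * (crossFrame u v)ᵀ := by
  ext i j
  change ![a, b, a ⨯₃ b] i ⬝ᵥ ![a, b, a ⨯₃ b] j = ![u, v, u ⨯₃ v] i ⬝ᵥ ![u, v, u ⨯₃ v] j
  fin_cases i <;> fin_cases j <;>
    simp [dot_self_cross, dot_cross_self, cross_dot_cross, dotProduct_comm b a,
      dotProduct_comm v u, dotProduct_comm (a ⨯₃ b), dotProduct_comm (u ⨯₃ v), huu, huv, hvv]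

lemma crossFrame_mul_transpose_eq_iff {A : Matrix (Fin 3) (Fin 3) R}
    (hA : A ∈ specialOrthogonalGroup (Fin 3) R) (u v a b : Fin 3 → R) :
    crossFrame u v * Aᵀ = crossFrame a b ↔ A *ᵥ u = a ∧ A *ᵥ v = b := by
  rw [crossFrame, crossFrame, of_vecCons_mul_transpose]
  constructor
  · intro h
    exact ⟨congrFun h 0, congrFun h 1⟩
  · rintro ⟨rfl, rfl⟩
    rw [mulVec_cross_of_mem_specialOrthogonalGroup hA]

end CrossFrame

lemma transpose_nonsing_inv_mul_mem_specialOrthogonalGroup {n R : Type*} [Fintype n]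
    [DecidableEq n] [CommRing R] {F G : Matrix n n R} (hF : IsUnit F.det)
    (hgram : G * Gᵀ = F * Fᵀ) (hdet : G.det = F.det) :
    (F⁻¹ * G)ᵀ ∈ specialOrthogonalGroup n R := by
  refine mem_specialOrthogonalGroup_iff.mpr ⟨(mem_orthogonalGroup_iff' n R).mpr ?_, ?_⟩
  · rw [transpose_transpose, Matrix.mul_assoc, transpose_mul, ← Matrix.mul_assoc G,
      hgram, ← Matrix.mul_assoc, nonsing_inv_mul_cancel_left _ _ hF, ← transpose_mul,
      nonsing_inv_mul _ hF, transpose_one]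
  · rw [det_transpose, det_mul, hdet, ← det_mul, nonsing_inv_mul _ hF, det_one]

theorem existsUnique_mem_specialOrthogonalGroup_mulVec_eq {R : Type*} [CommRing R]
    {u v a b : Fin 3 → R} (hG : IsUnit (u ⬝ᵥ u * (v ⬝ᵥ v) - (u ⬝ᵥ v) ^ 2))
    (huu : a ⬝ᵥ a = u ⬝ᵥ u) (huv : a ⬝ᵥ b = u ⬝ᵥ v) (hvv : b ⬝ᵥ b = v ⬝ᵥ v) :
    ∃! A : specialOrthogonalGroup (Fin 3) R,
      (A : Matrix (Fin 3) (Fin 3) R) *ᵥ u = a ∧ (A : Matrix (Fin 3) (Fin 3) R) *ᵥ v = b := by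
  have hF : IsUnit (crossFrame u v).det := by rwa [det_crossFrame]
  have hdet : (crossFrame a b).det = (crossFrame u v).det := by
    rw [det_crossFrame, det_crossFrame, huu, huv, hvv]
  have hmem := transpose_nonsing_inv_mul_mem_specialOrthogonalGroup hF
    (crossFrame_mul_transpose_self_eq huu huv hvv) hdet
  refine ⟨⟨_, hmem⟩, (crossFrame_mul_transpose_eq_iff hmem u v a b).mp ?_, ?_⟩
  · rw [transpose_transpose, mul_nonsing_inv_cancel_left _ _ hF]
  · rintro A hA
    ext : 1
    change (A : Matrix (Fin 3) (Fin 3) R) = ((crossFrame u v)⁻¹ * crossFrame a b)ᵀ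
    rw [← (crossFrame_mul_transpose_eq_iff A.2 u v a b).mpr hA, nonsing_inv_mul_cancel_left _ _ hF,
      transpose_transpose]

lemma AffineIndependent.linearIndependent_vsub_pair {k V P : Type*} [Ring k] [AddCommGroup V]
    [Module k V] [AddTorsor V P] {p₀ p₁ p₂ : P} (h : AffineIndependent k ![p₀, p₁, p₂]) :
    LinearIndependent k ![p₁ -ᵥ p₀, p₂ -ᵥ p₀] := by
  have := ((affineIndependent_iff_linearIndependent_vsub k _ 0).mp h).comp
    (finSuccAboveEquiv 0) (Equiv.injective _)
  convert this using 1
  ext i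
  fin_cases i <;> rfl

lemma gram_pos_of_linearIndependent {K : Type*} [Field K] [LinearOrder K] [IsStrictOrderedRing K]
    {u v : Fin 3 → K} (h : LinearIndependent K ![u, v]) :
    0 < u ⬝ᵥ u * (v ⬝ᵥ v) - (u ⬝ᵥ v) ^ 2 := by
  have hw := crossProduct_ne_zero_iff_linearIndependent.mpr h
  have hcross := cross_dot_cross u v u v
  rw [dotProduct_comm v u, ← sq] at hcross
  rw [← hcross]
  exact (Finset.sum_nonneg fun i _ => mul_self_nonneg _).lt_of_ne'
    (dotProduct_self_eq_zero.not.mpr hw)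

lemma Real.mul_cos_arccos_div {c d : ℝ} (h : |d| ≤ c) : c * Real.cos (Real.arccos (d / c)) = d := by
  obtain ⟨hd₁, hd₂⟩ := abs_le.mp h
  rcases (abs_nonneg d |>.trans h).eq_or_lt with rfl | hc
  · rw [zero_mul]
    linarith
  rw [Real.cos_arccos ((le_div_iff₀ hc).mpr (by linarith)) ((div_le_one hc).mpr hd₂),
    mul_div_cancel₀ _ hc.ne']

lemma existsUnique_mulVec_add_of_existsUnique_mulVec_sub {n R : Type*} [Fintype n] [DecidableEq n]
    [CommRing R] {S : Submonoid (Matrix n n R)} {x₀ x₁ x₂ a b : n → R}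
    (h : ∃! A : S, (A : Matrix n n R) *ᵥ (x₁ - x₀) = a ∧ (A : Matrix n n R) *ᵥ (x₂ - x₀) = b) :
    ∃! p : S × (n → R), (p.1 : Matrix n n R) *ᵥ x₀ + p.2 = 0 ∧
      (p.1 : Matrix n n R) *ᵥ x₁ + p.2 = a ∧ (p.1 : Matrix n n R) *ᵥ x₂ + p.2 = b := by
  obtain ⟨A, ⟨ha, hb⟩, hA⟩ := h
  refine ⟨(A, -((A : Matrix n n R) *ᵥ x₀)), ⟨add_neg_cancel _, ?_, ?_⟩, ?_⟩
  · rw [← ha, mulVec_sub, sub_eq_add_neg]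
  · rw [← hb, mulVec_sub, sub_eq_add_neg]
  · rintro ⟨B, D⟩ ⟨h₀, h₁, h₂⟩
    have hD : D = -((B : Matrix n n R) *ᵥ x₀) := eq_neg_of_add_eq_zero_right h₀
    subst hD
    obtain rfl : B = A := hA B ⟨by rw [mulVec_sub, ← h₁, sub_eq_add_neg],
      by rw [mulVec_sub, ← h₂, sub_eq_add_neg]⟩
    rfl

/-- Canonical alignment: for affinely independent `x₀, x₁, x₂ ∈ ℝ³` there is a unique pair
`(A, D)` with `A ∈ SO(3)`, `D ∈ ℝ³` such that `A·x₀ + D = 0`, `A·x₁ + D = (L₁,0,0)` and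
`A·x₂ + D = (L₂ cos θ, L₂ sin θ, 0)`, where `L₁ = ‖x₁ − x₀‖`, `L₂ = ‖x₂ − x₀‖` (Euclidean
norms) and `θ ∈ (0,π)` is the angle between `x₁ − x₀` and `x₂ − x₀`. -/
theorem canonical_alignment_existsUnique (x₀ x₁ x₂ : Fin 3 → ℝ)
    (haff : AffineIndependent ℝ ![x₀, x₁, x₂]) :
    let L₁ : ℝ := Real.sqrt (∑ i, (x₁ i - x₀ i) ^ 2)
    let L₂ : ℝ := Real.sqrt (∑ i, (x₂ i - x₀ i) ^ 2)
    let θ : ℝ := Real.arccos ((∑ i, (x₁ i - x₀ i) * (x₂ i - x₀ i)) / (L₁ * L₂))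
    ∃! p : Matrix.specialOrthogonalGroup (Fin 3) ℝ × (Fin 3 → ℝ),
      Matrix.mulVec (p.1 : Matrix (Fin 3) (Fin 3) ℝ) x₀ + p.2 = 0 ∧
      Matrix.mulVec (p.1 : Matrix (Fin 3) (Fin 3) ℝ) x₁ + p.2 = ![L₁, 0, 0] ∧
      Matrix.mulVec (p.1 : Matrix (Fin 3) (Fin 3) ℝ) x₂ + p.2 =
        ![L₂ * Real.cos θ, L₂ * Real.sin θ, 0] := by
  intro L₁ L₂ θ
  have hL₁ : L₁ ^ 2 = (x₁ - x₀) ⬝ᵥ (x₁ - x₀) := by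
    rw [Real.sq_sqrt (by positivity)]
    simp [dotProduct, sq]
  have hL₂ : L₂ ^ 2 = (x₂ - x₀) ⬝ᵥ (x₂ - x₀) := by
    rw [Real.sq_sqrt (by positivity)]
    simp [dotProduct, sq]
  have hG := gram_pos_of_linearIndependent haff.linearIndependent_vsub_pair
  rw [vsub_eq_sub, vsub_eq_sub] at hG
  have hcos : L₁ * L₂ * Real.cos θ = (x₁ - x₀) ⬝ᵥ (x₂ - x₀) := by
    change L₁ * L₂ * Real.cos (Real.arccos ((x₁ - x₀) ⬝ᵥ (x₂ - x₀) / (L₁ * L₂))) = _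
    refine Real.mul_cos_arccos_div (abs_le_of_sq_le_sq ?_ (by positivity))
    rw [mul_pow, hL₁, hL₂]
    linarith
  apply existsUnique_mulVec_add_of_existsUnique_mulVec_sub
  refine existsUnique_mem_specialOrthogonalGroup_mulVec_eq hG.ne'.isUnit ?_ ?_ ?_
  · rw [← hL₁]
    simp [sq]
  · rw [← hcos]
    simp only [dotProduct_cons, head_cons, tail_cons, mul_zero, dotProduct_of_isEmpty, add_zero]
    ring
  · rw [← hL₂]
    simp only [dotProduct_cons, head_cons, tail_cons, mul_zero, dotProduct_of_isEmpty, add_zero]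
    linear_combination L₂ ^ 2 * Real.sin_sq_add_cos_sq θ
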